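/- arXiv:2411.15660 — 6 statements merged into one kernel-verified Lean document; each statement's English description precedes it below -/
import Mathlib

section
/- Let g_1,...,g_m be i.i.d. standard Gaussian random variables and c_1,...,c_m ≥ 0. Then for any integer l ≥ 0, E[(∑_{i=1}^m c_i g_i²)^l] ≤ (∑_{i=1}^m c_i)^l · E[g^{2l}] where g ~ N(0,1). In particular E[(∑ c_i g_i²)^l] ≤ (C·l·∑ c_i)^l for an absolute constant C > 0. -/
/-!
Jensen's inequality for `x ↦ xⁿ` on `[0, ∞)`, applied pointwise to the convex combination with
weights `cᵢ / ∑ c` of the `gᵢ²`, gives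
`(∑ cᵢ gᵢ²)ˡ ≤ (∑ c)ˡ · ∑ (cᵢ / ∑ c) gᵢ²ˡ`. Taking expectations, every `gᵢ` has the law `N(0, 1)`,
so the right-hand side integrates to `(∑ c)ˡ · E[g²ˡ]`.
-/

open MeasureTheory ProbabilityTheory

lemma integrable_pow_gaussianReal (μ : ℝ) (v : NNReal) (n : ℕ) :
    Integrable (fun x : ℝ ↦ x ^ n) (gaussianReal μ v) :=
  integrable_pow_of_integrable_exp_mul (X := id) one_ne_zero
    (integrable_exp_mul_gaussianReal 1) (integrable_exp_mul_gaussianReal (-1)) n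

section WeightedSum

variable {ι Ω : Type*} [Fintype ι] [MeasurableSpace Ω] {μ : Measure Ω}
  {X : ι → Ω → ℝ} {n : ℕ}

lemma integral_pow_weighted_mean_le {w : ι → ℝ} (hw : ∀ i, 0 ≤ w i) (hw_sum : ∑ i, w i = 1)
    (hX : ∀ i ω, 0 ≤ X i ω) (hint : ∀ i, Integrable (fun ω ↦ X i ω ^ n) μ) :
    ∫ ω, (∑ i, w i * X i ω) ^ n ∂μ ≤ ∑ i, w i * ∫ ω, X i ω ^ n ∂μ := by
  have hjensen : ∀ ω, (∑ i, w i * X i ω) ^ n ≤ ∑ i, w i * X i ω ^ n := fun ω ↦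
    Real.pow_arith_mean_le_arith_mean_pow _ w (X · ω) (fun i _ ↦ hw i) hw_sum
      (fun i _ ↦ hX i ω) n
  have hint_sum : Integrable (fun ω ↦ ∑ i, w i * X i ω ^ n) μ :=
    integrable_finsetSum _ fun i _ ↦ (hint i).const_mul (w i)
  calc ∫ ω, (∑ i, w i * X i ω) ^ n ∂μ
      ≤ ∫ ω, ∑ i, w i * X i ω ^ n ∂μ :=
        integral_mono_of_nonneg
          (ae_of_all _ fun ω ↦
            pow_nonneg (Finset.sum_nonneg fun i _ ↦ mul_nonneg (hw i) (hX i ω)) n)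
          hint_sum (ae_of_all _ hjensen)
    _ = ∑ i, w i * ∫ ω, X i ω ^ n ∂μ := by
        rw [integral_finsetSum _ fun i _ ↦ (hint i).const_mul (w i)]
        simp only [integral_const_mul]

lemma integral_pow_weighted_sum_le {c : ι → ℝ} (hc : ∀ i, 0 ≤ c i) (hn : n ≠ 0)
    (hX : ∀ i ω, 0 ≤ X i ω) (hint : ∀ i, Integrable (fun ω ↦ X i ω ^ n) μ) {M : ℝ}
    (hM : ∀ i, ∫ ω, X i ω ^ n ∂μ ≤ M) :
    ∫ ω, (∑ i, c i * X i ω) ^ n ∂μ ≤ (∑ i, c i) ^ n * M := by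
  set S := ∑ i, c i
  rcases (Finset.sum_nonneg fun i _ ↦ hc i : 0 ≤ S).eq_or_lt with hS | hS
  · have hc_zero : ∀ i, c i = 0 := fun i ↦
      (Finset.sum_eq_zero_iff_of_nonneg fun i _ ↦ hc i).mp hS.symm i (Finset.mem_univ i)
    simp [S, hc_zero, zero_pow hn]
  have hw_sum : ∑ i, c i / S = 1 := by rw [← Finset.sum_div, div_self hS.ne']
  have hscale : ∀ ω, (∑ i, c i * X i ω) ^ n = S ^ n * (∑ i, c i / S * X i ω) ^ n := fun ω ↦ by
    rw [← mul_pow, Finset.mul_sum]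
    congr 2 with i
    rw [← mul_assoc, mul_div_cancel₀ _ hS.ne']
  calc ∫ ω, (∑ i, c i * X i ω) ^ n ∂μ
      = S ^ n * ∫ ω, (∑ i, c i / S * X i ω) ^ n ∂μ := by
        simp only [hscale, integral_const_mul]
    _ ≤ S ^ n * ∑ i, c i / S * ∫ ω, X i ω ^ n ∂μ := by
        gcongr
        exact integral_pow_weighted_mean_le (fun i ↦ div_nonneg (hc i) hS.le) hw_sum hX hint
    _ ≤ S ^ n * ∑ i, c i / S * M := by
        gcongr with i
        · exact div_nonneg (hc i) hS.le
        · exact hM i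
    _ = S ^ n * M := by rw [← Finset.sum_mul, hw_sum, one_mul]

end WeightedSum

theorem gaussian_weighted_chi_square_moment_general
    {Ω : Type*} [MeasurableSpace Ω] (μ : Measure Ω) [IsProbabilityMeasure μ]
    (m : ℕ) (g : Fin m → Ω → ℝ) (c : Fin m → ℝ) (hc : ∀ i, 0 ≤ c i)
    (hmeas : ∀ i, Measurable (g i))
    (hlaw : ∀ i, Measure.map (g i) μ = gaussianReal 0 1)
    (l : ℕ) (C : ℝ) :
    (∫ ω, (∑ i, c i * (g i ω) ^ 2) ^ l ∂μ
        ≤ (∑ i, c i) ^ l * ∫ x, x ^ (2 * l) ∂(gaussianReal 0 1))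
    ∧ ((∫ x, x ^ (2 * l) ∂(gaussianReal 0 1)) ≤ (C * l) ^ l →
        ∫ ω, (∑ i, c i * (g i ω) ^ 2) ^ l ∂μ ≤ (C * l * ∑ i, c i) ^ l) := by
  have hint : ∀ i, Integrable (fun ω ↦ (g i ω ^ 2) ^ l) μ := fun i ↦ by
    have h := integrable_pow_gaussianReal 0 1 (2 * l)
    rw [← hlaw i, integrable_map_measure (by fun_prop) (hmeas i).aemeasurable] at h
    simpa only [pow_mul, Function.comp_def] using h
  have hmoment : ∀ i, ∫ ω, (g i ω ^ 2) ^ l ∂μ = ∫ x, x ^ (2 * l) ∂(gaussianReal 0 1) := fun i ↦ by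
    simp_rw [← pow_mul]
    rw [← hlaw i, integral_map (hmeas i).aemeasurable (by fun_prop)]
  have hmain : ∫ ω, (∑ i, c i * (g i ω) ^ 2) ^ l ∂μ
      ≤ (∑ i, c i) ^ l * ∫ x, x ^ (2 * l) ∂(gaussianReal 0 1) := by
    rcases eq_or_ne l 0 with rfl | hl
    · simp
    · exact integral_pow_weighted_sum_le hc hl (fun _ _ ↦ sq_nonneg _) hint fun i ↦ (hmoment i).le
  refine ⟨hmain, fun hmoment_le ↦ hmain.trans ?_⟩
  rw [mul_comm (C * l), mul_pow]
  gcongr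
  exact pow_nonneg (Finset.sum_nonneg fun i _ ↦ hc i) l

/-- Let `g 1, ..., g m` be i.i.d. standard Gaussians and `c i ≥ 0`. Then for any `l : ℕ`,
`E[(∑ i, c i * (g i)²)^l] ≤ (∑ i, c i)^l * E[g^{2l}]` where `g ~ N(0,1)`; in particular,
if `E[g^{2l}] ≤ (C·l)^l` then `E[(∑ i, c i * (g i)²)^l] ≤ (C·l·∑ i, c i)^l`. -/
theorem gaussian_weighted_chi_square_moment
    {Ω : Type*} [MeasurableSpace Ω] (μ : Measure Ω) [IsProbabilityMeasure μ]
    (m : ℕ) (g : Fin m → Ω → ℝ) (c : Fin m → ℝ) (hc : ∀ i, 0 ≤ c i)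
    (hmeas : ∀ i, Measurable (g i))
    (hlaw : ∀ i, Measure.map (g i) μ = gaussianReal 0 1)
    (hindep : iIndepFun g μ)
    (l : ℕ) (C : ℝ) (hC : 0 < C) :
    (∫ ω, (∑ i, c i * (g i ω) ^ 2) ^ l ∂μ
        ≤ (∑ i, c i) ^ l * ∫ x, x ^ (2 * l) ∂(gaussianReal 0 1))
    ∧ ((∫ x, x ^ (2 * l) ∂(gaussianReal 0 1)) ≤ (C * l) ^ l →
        ∫ ω, (∑ i, c i * (g i ω) ^ 2) ^ l ∂μ ≤ (C * l * ∑ i, c i) ^ l) :=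
  gaussian_weighted_chi_square_moment_general μ m g c hc hmeas hlaw l C
end

section
/- Let X be a real random variable such that P(|X| ≥ max{a+bt, √(a+bt)}) ≤ e^{−t} for all t > 0, where 0 < a < 1 and b > 0. Then E[X²] ≤ a + b + 2ab + 2b². -/
open MeasureTheory Set Filter Topology Real

/-!
By the layer-cake formula, `E[X²] = ∫₀^∞ P(X² ≥ t) dt`. For `t ≥ 0` put `u = min t √t`; then
`max u √u = √t`, so the tail bound at the level `s` with `a + b s = u` gives
`P(X² ≥ t) ≤ min 1 (exp ((a - u) / b))`. Integrating this majorant over `(0, a]`, `(a, 1]` and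
`(1, ∞)` gives at most `a`, `b (1 - e)` and `2 b (1 + b) e` with `e = exp ((a - 1) / b)`, and
`(1 + b) e ≤ a + b` follows from `exp x ≥ 1 + x`.
-/

theorem integral_le_setIntegral_Ioi_of_measure_le {α : Type*} [MeasurableSpace α] {μ : Measure α}
    {f : α → ℝ} {g : ℝ → ℝ} (hf_nn : 0 ≤ᵐ[μ] f) (hf : AEMeasurable f μ)
    (hg_nn : ∀ t ∈ Ioi 0, 0 ≤ g t) (hg : IntegrableOn g (Ioi 0))
    (hfg : ∀ t ∈ Ioi 0, μ {x | t ≤ f x} ≤ ENNReal.ofReal (g t)) :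
    ∫ x, f x ∂μ ≤ ∫ t in Ioi 0, g t := by
  rw [integral_eq_lintegral_of_nonneg_ae hf_nn hf.aestronglyMeasurable]
  refine ENNReal.toReal_le_of_le_ofReal (setIntegral_nonneg measurableSet_Ioi hg_nn) ?_
  rw [lintegral_eq_lintegral_meas_le μ hf_nn hf, ofReal_integral_eq_lintegral_ofReal hg
    ((ae_restrict_iff' measurableSet_Ioi).2 (ae_of_all _ hg_nn))]
  exact setLIntegral_mono' measurableSet_Ioi hfg

theorem integral_exp_sub_div (a c : ℝ) {b : ℝ} (hb : b ≠ 0) :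
    ∫ t in a..c, exp ((a - t) / b) = b - b * exp ((a - c) / b) := by
  simp only [sub_div]
  rw [intervalIntegral.integral_comp_sub_div (fun x => exp x) hb, integral_exp, sub_self, exp_zero,
    smul_eq_mul]
  ring

theorem tendsto_add_mul_exp_sub_div_atTop (a : ℝ) {b : ℝ} (hb : 0 < b) :
    Tendsto (fun x => (x + b) * exp ((a - x) / b)) atTop (𝓝 0) := by
  have h1 := tendsto_rpow_mul_exp_neg_mul_atTop_nhds_zero 1 b⁻¹ (inv_pos.2 hb)
  have h0 := tendsto_rpow_mul_exp_neg_mul_atTop_nhds_zero 0 b⁻¹ (inv_pos.2 hb)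
  simp only [rpow_one, rpow_zero, one_mul] at h1 h0
  have := (h1.add (h0.const_mul b)).const_mul (exp (a / b))
  rw [mul_zero, add_zero, mul_zero] at this
  refine this.congr fun x => ?_
  rw [show (a - x) / b = a / b + -b⁻¹ * x by field_simp; ring, exp_add]
  ring

theorem hasDerivAt_sqrt_add_mul_exp_sub_sqrt_div (a : ℝ) {b t : ℝ} (hb : b ≠ 0) (ht : 0 < t) :
    HasDerivAt (fun t => -2 * b * ((√t + b) * exp ((a - √t) / b))) (exp ((a - √t) / b)) t := by
  have hsqrt := hasDerivAt_sqrt ht.ne'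
  have hexp := ((hsqrt.const_sub a).div_const b).exp
  refine (((hsqrt.add_const b).mul hexp).const_mul (-2 * b)).congr_deriv ?_
  have := (sqrt_pos.2 ht).ne'
  field_simp
  ring

theorem tendsto_sqrt_add_mul_exp_sub_sqrt_div_atTop (a : ℝ) {b : ℝ} (hb : 0 < b) :
    Tendsto (fun t => -2 * b * ((√t + b) * exp ((a - √t) / b))) atTop (𝓝 0) := by
  simpa using ((tendsto_add_mul_exp_sub_div_atTop a hb).comp tendsto_sqrt_atTop).const_mul (-2 * b)

theorem integrableOn_exp_sub_sqrt_div (a : ℝ) {b : ℝ} (hb : 0 < b) :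
    IntegrableOn (fun t => exp ((a - √t) / b)) (Ioi 1) :=
  integrableOn_Ioi_deriv_of_nonneg'
    (fun t ht => hasDerivAt_sqrt_add_mul_exp_sub_sqrt_div a hb.ne' (one_pos.trans_le ht))
    (fun _ _ => (exp_pos _).le)
    (tendsto_sqrt_add_mul_exp_sub_sqrt_div_atTop a hb)

theorem integral_exp_sub_sqrt_div (a : ℝ) {b : ℝ} (hb : 0 < b) :
    ∫ t in Ioi 1, exp ((a - √t) / b) = 2 * b * (1 + b) * exp ((a - 1) / b) := by
  rw [integral_Ioi_of_hasDerivAt_of_nonneg'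
    (fun t ht => hasDerivAt_sqrt_add_mul_exp_sub_sqrt_div a hb.ne' (one_pos.trans_le ht))
    (fun _ _ => (exp_pos _).le)
    (tendsto_sqrt_add_mul_exp_sub_sqrt_div_atTop a hb),
    sqrt_one]
  ring

theorem one_add_mul_exp_sub_one_div_le {a b : ℝ} (ha0 : 0 ≤ a) (ha1 : a ≤ 1) (hb : 0 < b) :
    (1 + b) * exp ((a - 1) / b) ≤ a + b := by
  have hexp : 1 + (1 - a) / b ≤ exp ((1 - a) / b) := by linarith [add_one_le_exp ((1 - a) / b)]
  have hprod : (a + b) * (1 + (1 - a) / b) = 1 + b + a * (1 - a) / b := by field_simp; ring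
  rw [show (a - 1) / b = -((1 - a) / b) by ring, exp_neg, ← div_eq_mul_inv,
    div_le_iff₀ (exp_pos _)]
  calc 1 + b ≤ (a + b) * (1 + (1 - a) / b) := by
        rw [hprod]; linarith [div_nonneg (mul_nonneg ha0 (sub_nonneg.2 ha1)) hb.le]
    _ ≤ (a + b) * exp ((1 - a) / b) := mul_le_mul_of_nonneg_left hexp (by linarith)

theorem min_self_sqrt_of_le_one {t : ℝ} (ht : 0 ≤ t) (h1 : t ≤ 1) : min t √t = t :=
  min_eq_left (Real.le_sqrt_of_sq_le (by nlinarith))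

theorem min_self_sqrt_of_one_le {t : ℝ} (h1 : 1 ≤ t) : min t √t = √t :=
  min_eq_right (sqrt_le_self_iff.2 (Or.inr h1))

theorem max_min_sqrt_self {t : ℝ} (ht : 0 ≤ t) : max (min t √t) √(min t √t) = √t := by
  rcases le_total t 1 with h | h
  · rw [min_self_sqrt_of_le_one ht h]
    exact max_eq_right (Real.le_sqrt_of_sq_le (by nlinarith))
  · rw [min_self_sqrt_of_one_le h]
    exact max_eq_left (sqrt_le_self_iff.2 (Or.inr (one_le_sqrt.2 h)))

noncomputable def mixedTailMajorant (a b t : ℝ) : ℝ := min 1 (exp ((a - min t √t) / b))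

theorem measure_le_sq_le_mixedTailMajorant {Ω : Type*} [MeasurableSpace Ω] (μ : Measure Ω)
    [IsProbabilityMeasure μ] (X : Ω → ℝ) {a b : ℝ} (hb : 0 < b)
    (htail : ∀ s > 0, μ {ω | max (a + b * s) √(a + b * s) ≤ |X ω|} ≤ ENNReal.ofReal (exp (-s)))
    {t : ℝ} (ht : 0 ≤ t) :
    μ {ω | t ≤ X ω ^ 2} ≤ ENNReal.ofReal (mixedTailMajorant a b t) := by
  rw [mixedTailMajorant]
  set u := min t √t
  rcases le_or_gt u a with hua | hau
  · rw [min_eq_left (one_le_exp (div_nonneg (by linarith) hb.le)), ENNReal.ofReal_one]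
    exact prob_le_one
  · have hs_pos : 0 < (u - a) / b := div_pos (sub_pos.2 hau) hb
    have hu : a + b * ((u - a) / b) = u := by rw [mul_div_cancel₀ _ hb.ne']; ring
    have hevent : {ω | t ≤ X ω ^ 2} =
        {ω | max (a + b * ((u - a) / b)) √(a + b * ((u - a) / b)) ≤ |X ω|} := by
      ext ω
      rw [hu, mem_ofPred_eq, mem_ofPred_eq, max_min_sqrt_self ht, sqrt_le_left (abs_nonneg _),
        sq_abs]
    rw [hevent, show (a - u) / b = -((u - a) / b) by ring,
      min_eq_right (exp_le_one_iff.2 (neg_nonpos.2 hs_pos.le))]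
    exact htail _ hs_pos

theorem continuous_mixedTailMajorant (a b : ℝ) : Continuous (mixedTailMajorant a b) := by
  unfold mixedTailMajorant
  fun_prop

theorem mixedTailMajorant_nonneg (a b t : ℝ) : 0 ≤ mixedTailMajorant a b t :=
  le_min zero_le_one (exp_pos _).le

theorem mixedTailMajorant_le_one (a b t : ℝ) : mixedTailMajorant a b t ≤ 1 :=
  min_le_left _ _

theorem mixedTailMajorant_le_exp_sub_div (a b : ℝ) {t : ℝ} (ht0 : 0 ≤ t) (ht1 : t ≤ 1) :
    mixedTailMajorant a b t ≤ exp ((a - t) / b) := by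
  rw [mixedTailMajorant, min_self_sqrt_of_le_one ht0 ht1]
  exact min_le_right _ _

theorem mixedTailMajorant_le_exp_sub_sqrt_div (a b : ℝ) {t : ℝ} (ht : 1 ≤ t) :
    mixedTailMajorant a b t ≤ exp ((a - √t) / b) := by
  rw [mixedTailMajorant, min_self_sqrt_of_one_le ht]
  exact min_le_right _ _

theorem integrableOn_mixedTailMajorant_Ioi_one (a : ℝ) {b : ℝ} (hb : 0 < b) :
    IntegrableOn (mixedTailMajorant a b) (Ioi 1) := by
  refine (integrableOn_exp_sub_sqrt_div a hb).mono'
    (continuous_mixedTailMajorant a b).aestronglyMeasurable.restrict ?_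
  filter_upwards [ae_restrict_mem measurableSet_Ioi] with t ht
  rw [norm_of_nonneg (mixedTailMajorant_nonneg a b t)]
  exact mixedTailMajorant_le_exp_sub_sqrt_div a b (le_of_lt ht)

theorem integrableOn_mixedTailMajorant (a : ℝ) {b : ℝ} (hb : 0 < b) :
    IntegrableOn (mixedTailMajorant a b) (Ioi 0) := by
  rw [← Ioc_union_Ioi_eq_Ioi zero_le_one]
  exact (continuous_mixedTailMajorant a b).integrableOn_Ioc.union
    (integrableOn_mixedTailMajorant_Ioi_one a hb)

theorem setIntegral_mixedTailMajorant_le {a b : ℝ} (ha0 : 0 ≤ a) (ha1 : a ≤ 1) (hb : 0 < b) :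
    ∫ t in Ioi 0, mixedTailMajorant a b t ≤ a + b + 2 * a * b + 2 * b ^ 2 := by
  have hcont := continuous_mixedTailMajorant a b
  rw [← intervalIntegral.integral_interval_add_Ioi' (hcont.intervalIntegrable 0 1)
      (integrableOn_mixedTailMajorant_Ioi_one a hb),
    ← intervalIntegral.integral_add_adjacent_intervals (hcont.intervalIntegrable 0 a)
      (hcont.intervalIntegrable a 1)]
  have h0a : ∫ t in 0..a, mixedTailMajorant a b t ≤ a := by
    calc ∫ t in 0..a, mixedTailMajorant a b t ≤ ∫ _ in 0..a, (1 : ℝ) :=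
          intervalIntegral.integral_mono_on ha0 (hcont.intervalIntegrable _ _)
            intervalIntegrable_const fun t _ => mixedTailMajorant_le_one a b t
      _ = a := by simp
  have ha_one : ∫ t in a..1, mixedTailMajorant a b t ≤ b - b * exp ((a - 1) / b) := by
    calc ∫ t in a..1, mixedTailMajorant a b t ≤ ∫ t in a..1, exp ((a - t) / b) :=
          intervalIntegral.integral_mono_on ha1 (hcont.intervalIntegrable _ _)
            ((by fun_prop : Continuous fun t => exp ((a - t) / b)).intervalIntegrable _ _)
            fun t ht => mixedTailMajorant_le_exp_sub_div a b (ha0.trans ht.1) ht.2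
      _ = b - b * exp ((a - 1) / b) := integral_exp_sub_div a 1 hb.ne'
  have h1 : ∫ t in Ioi 1, mixedTailMajorant a b t ≤ 2 * b * (1 + b) * exp ((a - 1) / b) := by
    calc ∫ t in Ioi 1, mixedTailMajorant a b t ≤ ∫ t in Ioi 1, exp ((a - √t) / b) :=
          setIntegral_mono_on (integrableOn_mixedTailMajorant_Ioi_one a hb)
            (integrableOn_exp_sub_sqrt_div a hb) measurableSet_Ioi
            fun t ht => mixedTailMajorant_le_exp_sub_sqrt_div a b (le_of_lt ht)
      _ = 2 * b * (1 + b) * exp ((a - 1) / b) := integral_exp_sub_sqrt_div a hb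
  have hexp := mul_le_mul_of_nonneg_left (one_add_mul_exp_sub_one_div_le ha0 ha1 hb)
    (by positivity : (0 : ℝ) ≤ 2 * b)
  linarith [mul_pos hb (exp_pos ((a - 1) / b))]

/-- Second moment bound under a mixed tail: if
`P(|X| ≥ max{a+bt, √(a+bt)}) ≤ e^{−t}` for all `t > 0`, with `0 < a < 1`, `b > 0`,
then `E[X²] ≤ a + b + 2ab + 2b²`. -/
theorem second_moment_of_mixed_tail
    {Ω : Type*} [MeasurableSpace Ω] (μ : Measure Ω) [IsProbabilityMeasure μ]
    (X : Ω → ℝ) (hX : Measurable X)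
    (a b : ℝ) (ha0 : 0 < a) (ha1 : a < 1) (hb : 0 < b)
    (htail : ∀ t > 0,
      μ {ω | max (a + b * t) (Real.sqrt (a + b * t)) ≤ |X ω|}
        ≤ ENNReal.ofReal (Real.exp (-t))) :
    ∫ ω, (X ω) ^ 2 ∂μ ≤ a + b + 2 * a * b + 2 * b ^ 2 :=
  calc ∫ ω, X ω ^ 2 ∂μ ≤ ∫ t in Ioi 0, mixedTailMajorant a b t :=
        integral_le_setIntegral_Ioi_of_measure_le (ae_of_all _ fun ω => sq_nonneg (X ω))
          (hX.pow_const 2).aemeasurable (fun t _ => mixedTailMajorant_nonneg a b t)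
          (integrableOn_mixedTailMajorant a hb)
          fun t ht => measure_le_sq_le_mixedTailMajorant μ X hb htail (le_of_lt ht)
    _ ≤ a + b + 2 * a * b + 2 * b ^ 2 := setIntegral_mixedTailMajorant_le ha0.le ha1.le hb
end

section
/- Let X be a real random variable such that P(|X| ≥ max{a+bt, √(a+bt)}) ≤ e^{−t} for all t > 0, where 0 < a < 1 and b > 0. Then E[X⁴] ≤ a² + 2ab + 2b² + 16a³b + 96b⁴. -/
/-!
By the layer-cake formula `E[X⁴] = ∫₀^∞ 4t³ P(|X| ≥ t) dt`. Split the range at `√a` and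
`1`. Below `√a` bound the probability by `1`. For `√a < t ≤ 1` choose the parameter `s` with
`a + bs = t²`, so that the threshold `max (t², t)` is `t` and `P(|X| ≥ t) ≤ e^{(a - t²)/b}`;
for `t ≥ 1` choose `a + bs = t`, giving `P(|X| ≥ t) ≤ e^{(a - t)/b}`. The resulting integrals
have explicit antiderivatives, and the sum of the three contributions is at most the claimed
bound.
-/

open MeasureTheory Filter Set Topology Real Polynomial

theorem lintegral_ofReal_pow_succ_eq_lintegral_meas_le_mul {α : Type*}
    [MeasurableSpace α] (μ : Measure α) {f : α → ℝ} (f_nn : 0 ≤ᵐ[μ] f)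
    (f_mble : AEMeasurable f μ) (n : ℕ) :
    ∫⁻ ω, ENNReal.ofReal (f ω ^ (n + 1)) ∂μ =
      ∫⁻ t in Ioi 0, μ {ω | t ≤ f ω} * ENNReal.ofReal ((n + 1) * t ^ n) := by
  have hcont : Continuous fun t : ℝ => (n + 1) * t ^ n := by fun_prop
  rw [← lintegral_comp_eq_lintegral_meas_le_mul μ f_nn f_mble
    (fun t _ => hcont.intervalIntegrable _ _)
    ((ae_restrict_mem measurableSet_Ioi).mono fun t (ht : 0 < t) => by positivity)]
  refine lintegral_congr fun ω => ?_
  rw [intervalIntegral.integral_const_mul, integral_pow]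
  field_simp
  simp

theorem lintegral_Ioc_ofReal_four_mul_pow_three {c : ℝ} (hc : 0 ≤ c) :
    ∫⁻ t in Ioc 0 c, ENNReal.ofReal (4 * t ^ 3) = ENNReal.ofReal (c ^ 4) := by
  have hcont : Continuous fun t : ℝ => 4 * t ^ 3 := by fun_prop
  rw [← ofReal_integral_eq_lintegral_ofReal hcont.integrableOn_Ioc
    ((ae_restrict_mem measurableSet_Ioc).mono fun t (ht : t ∈ Ioc 0 c) => by
      have := ht.1; positivity),
    ← intervalIntegral.integral_of_le hc, intervalIntegral.integral_const_mul, integral_pow]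
  congr 1
  ring

theorem lintegral_Ioi_ofReal_eq_ofReal_neg_of_hasDerivAt {F f : ℝ → ℝ} {c : ℝ}
    (hderiv : ∀ t ∈ Ici c, HasDerivAt F (f t) t) (hf : ∀ t ∈ Ioi c, 0 ≤ f t)
    (hlim : Tendsto F atTop (𝓝 0)) :
    ∫⁻ t in Ioi c, ENNReal.ofReal (f t) = ENNReal.ofReal (-F c) := by
  rw [← ofReal_integral_eq_lintegral_ofReal (integrableOn_Ioi_deriv_of_nonneg' hderiv hf hlim)
    ((ae_restrict_mem measurableSet_Ioi).mono hf),
    integral_Ioi_of_hasDerivAt_of_nonneg' hderiv hf hlim, zero_sub]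

theorem Polynomial.tendsto_eval_mul_exp_sub_div_atTop (p : ℝ[X]) (a : ℝ) {b : ℝ}
    (hb : 0 < b) :
    Tendsto (fun t => p.eval t * exp ((a - t) / b)) atTop (𝓝 0) := by
  refine ((tendsto_div_exp_atTop ((C (exp (a / b)) * p).comp (C b * X))).comp
    (tendsto_id.atTop_div_const hb)).congr fun t => ?_
  simp only [Function.comp_apply, id, eval_comp, eval_mul, eval_C, eval_X]
  rw [mul_div_cancel₀ t hb.ne', sub_div, exp_sub]
  ring

section ExponentialIntegrals

variable {a b : ℝ}

theorem lintegral_Ioi_sqrt_four_mul_pow_three_mul_exp (ha : 0 ≤ a) (hb : 0 < b) :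
    ∫⁻ t in Ioi √a, ENNReal.ofReal (4 * t ^ 3 * exp ((a - t ^ 2) / b)) =
      ENNReal.ofReal (2 * a * b + 2 * b ^ 2) := by
  have hderiv (t : ℝ) : HasDerivAt (fun t => -(2 * b * t ^ 2 + 2 * b ^ 2) * exp ((a - t ^ 2) / b))
      (4 * t ^ 3 * exp ((a - t ^ 2) / b)) t := by
    refine ((((hasDerivAt_pow 2 t).const_mul (2 * b)).add_const (2 * b ^ 2)).neg.mul
      (((hasDerivAt_pow 2 t).const_sub a).div_const b).exp).congr_deriv ?_
    simp only [Pi.neg_apply]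
    field_simp
    ring
  have hlim : Tendsto (fun t => -(2 * b * t ^ 2 + 2 * b ^ 2) * exp ((a - t ^ 2) / b))
      atTop (𝓝 0) :=
    ((-(C (2 * b) * X + C (2 * b ^ 2))).tendsto_eval_mul_exp_sub_div_atTop a hb).comp
      (tendsto_pow_atTop two_ne_zero) |>.congr fun t => by simp
  rw [lintegral_Ioi_ofReal_eq_ofReal_neg_of_hasDerivAt (fun t _ => hderiv t)
    (fun t ht => by have : 0 < t := (sqrt_nonneg a).trans_lt ht; positivity) hlim,
    sq_sqrt ha, sub_self, zero_div, exp_zero]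
  congr 1
  ring

theorem lintegral_Ioi_four_mul_pow_three_mul_exp (ha : 0 ≤ a) (hb : 0 < b) :
    ∫⁻ t in Ioi a, ENNReal.ofReal (4 * t ^ 3 * exp ((a - t) / b)) =
      ENNReal.ofReal (4 * (a ^ 3 * b + 3 * a ^ 2 * b ^ 2 + 6 * a * b ^ 3 + 6 * b ^ 4)) := by
  have hpoly (t : ℝ) : HasDerivAt
      (fun t => -4 * (t ^ 3 * b + 3 * t ^ 2 * b ^ 2 + 6 * t * b ^ 3 + 6 * b ^ 4))
      (-4 * (3 * t ^ 2 * b + 6 * t * b ^ 2 + 6 * b ^ 3)) t := by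
    refine ((((((hasDerivAt_pow 3 t).mul_const b).add
      (((hasDerivAt_pow 2 t).const_mul 3).mul_const (b ^ 2))).add
      (((hasDerivAt_id t).const_mul 6).mul_const (b ^ 3))).add_const (6 * b ^ 4)).const_mul
      (-4)).congr_deriv ?_
    simp only [Nat.cast_ofNat]
    ring
  have hderiv (t : ℝ) : HasDerivAt (fun t =>
      -4 * (t ^ 3 * b + 3 * t ^ 2 * b ^ 2 + 6 * t * b ^ 3 + 6 * b ^ 4) * exp ((a - t) / b))
      (4 * t ^ 3 * exp ((a - t) / b)) t := by
    refine ((hpoly t).mul (((hasDerivAt_id t).const_sub a).div_const b).exp).congr_deriv ?_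
    simp only [id]
    field_simp
    ring
  have hlim : Tendsto (fun t =>
      -4 * (t ^ 3 * b + 3 * t ^ 2 * b ^ 2 + 6 * t * b ^ 3 + 6 * b ^ 4) * exp ((a - t) / b))
      atTop (𝓝 0) :=
    (C (-4) * (C b * X ^ 3 + C (3 * b ^ 2) * X ^ 2 + C (6 * b ^ 3) * X + C (6 * b ^ 4))
      |>.tendsto_eval_mul_exp_sub_div_atTop a hb).congr fun t => by simp; ring
  rw [lintegral_Ioi_ofReal_eq_ofReal_neg_of_hasDerivAt (fun t _ => hderiv t)
    (fun t ht => by have : 0 < t := ha.trans_lt ht; positivity) hlim,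
    sub_self, zero_div, exp_zero]
  congr 1
  ring

end ExponentialIntegrals

section MixedTail

variable {Ω : Type*} [MeasurableSpace Ω]

def HasMixedTail (μ : Measure Ω) (X : Ω → ℝ) (a b : ℝ) : Prop :=
  ∀ s > 0, μ {ω | max (a + b * s) √(a + b * s) ≤ |X ω|} ≤ ENNReal.ofReal (exp (-s))

variable {μ : Measure Ω} {X : Ω → ℝ} {a b : ℝ}

theorem HasMixedTail.measure_le_abs_le (hb : 0 < b) (htail : HasMixedTail μ X a b)
    {u t : ℝ} (hu : a < u) (hut : max u √u ≤ t) :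
    μ {ω | t ≤ |X ω|} ≤ ENNReal.ofReal (exp ((a - u) / b)) := by
  have h := htail ((u - a) / b) (div_pos (sub_pos.2 hu) hb)
  rw [show a + b * ((u - a) / b) = u by field_simp; ring,
    show -((u - a) / b) = (a - u) / b by ring] at h
  exact (measure_mono fun ω (hω : t ≤ |X ω|) => hut.trans hω).trans h

theorem setLIntegral_Ioc_zero_meas_le_mul_le [IsZeroOrProbabilityMeasure μ] {c : ℝ}
    (hc : 0 ≤ c) :
    ∫⁻ t in Ioc 0 c, μ {ω | t ≤ |X ω|} * ENNReal.ofReal (4 * t ^ 3) ≤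
      ENNReal.ofReal (c ^ 4) :=
  calc ∫⁻ t in Ioc 0 c, μ {ω | t ≤ |X ω|} * ENNReal.ofReal (4 * t ^ 3)
      ≤ ∫⁻ t in Ioc 0 c, ENNReal.ofReal (4 * t ^ 3) :=
        lintegral_mono fun _ => mul_le_of_le_one_left' prob_le_one
    _ = ENNReal.ofReal (c ^ 4) := lintegral_Ioc_ofReal_four_mul_pow_three hc

theorem setLIntegral_Ioc_sqrt_one_meas_le_mul_le (hb : 0 < b)
    (htail : HasMixedTail μ X a b)
    (ha : 0 ≤ a) :
    ∫⁻ t in Ioc √a 1, μ {ω | t ≤ |X ω|} * ENNReal.ofReal (4 * t ^ 3) ≤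
      ENNReal.ofReal (2 * a * b + 2 * b ^ 2) := by
  have hpoint : ∀ t ∈ Ioc √a 1, μ {ω | t ≤ |X ω|} * ENNReal.ofReal (4 * t ^ 3) ≤
      ENNReal.ofReal (4 * t ^ 3 * exp ((a - t ^ 2) / b)) := by
    rintro t ⟨hat, ht1⟩
    have ht0 : 0 < t := (sqrt_nonneg a).trans_lt hat
    have htail_t : μ {ω | t ≤ |X ω|} ≤ ENNReal.ofReal (exp ((a - t ^ 2) / b)) :=
      htail.measure_le_abs_le hb ((sqrt_lt' ht0).1 hat)
        (by rw [sqrt_sq ht0.le]; exact max_le (by nlinarith) le_rfl)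
    rw [mul_comm (4 * t ^ 3), ENNReal.ofReal_mul (exp_pos _).le]
    exact mul_le_mul_left htail_t _
  calc _ ≤ ∫⁻ t in Ioc √a 1, ENNReal.ofReal (4 * t ^ 3 * exp ((a - t ^ 2) / b)) :=
        setLIntegral_mono' measurableSet_Ioc hpoint
    _ ≤ ∫⁻ t in Ioi √a, ENNReal.ofReal (4 * t ^ 3 * exp ((a - t ^ 2) / b)) :=
        lintegral_mono_set Ioc_subset_Ioi_self
    _ = _ := lintegral_Ioi_sqrt_four_mul_pow_three_mul_exp ha hb

theorem setLIntegral_Ioi_one_meas_le_mul_le (hb : 0 < b)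
    (htail : HasMixedTail μ X a b)
    (ha0 : 0 ≤ a) (ha1 : a < 1) :
    ∫⁻ t in Ioi 1, μ {ω | t ≤ |X ω|} * ENNReal.ofReal (4 * t ^ 3) ≤
      ENNReal.ofReal (4 * (a ^ 3 * b + 3 * a ^ 2 * b ^ 2 + 6 * a * b ^ 3 + 6 * b ^ 4)) := by
  have hpoint : ∀ t ∈ Ioi 1, μ {ω | t ≤ |X ω|} * ENNReal.ofReal (4 * t ^ 3) ≤
      ENNReal.ofReal (4 * t ^ 3 * exp ((a - t) / b)) := by
    intro t (ht : 1 < t)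
    have htail_t : μ {ω | t ≤ |X ω|} ≤ ENNReal.ofReal (exp ((a - t) / b)) :=
      htail.measure_le_abs_le hb (ha1.trans ht)
        (max_le le_rfl (sqrt_le_self_iff.2 (Or.inr ht.le)))
    rw [mul_comm (4 * t ^ 3), ENNReal.ofReal_mul (exp_pos _).le]
    exact mul_le_mul_left htail_t _
  calc _ ≤ ∫⁻ t in Ioi 1, ENNReal.ofReal (4 * t ^ 3 * exp ((a - t) / b)) :=
        setLIntegral_mono' measurableSet_Ioi hpoint
    _ ≤ ∫⁻ t in Ioi a, ENNReal.ofReal (4 * t ^ 3 * exp ((a - t) / b)) :=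
        lintegral_mono_set (Ioi_subset_Ioi ha1.le)
    _ = _ := lintegral_Ioi_four_mul_pow_three_mul_exp ha0 hb

theorem HasMixedTail.lintegral_ofReal_pow_four_le [IsZeroOrProbabilityMeasure μ] (hb : 0 < b)
    (htail : HasMixedTail μ X a b) (hX : AEMeasurable X μ) (ha0 : 0 ≤ a) (ha1 : a < 1) :
    ∫⁻ ω, ENNReal.ofReal (X ω ^ 4) ∂μ ≤ ENNReal.ofReal (a ^ 2 + (2 * a * b + 2 * b ^ 2) +
      4 * (a ^ 3 * b + 3 * a ^ 2 * b ^ 2 + 6 * a * b ^ 3 + 6 * b ^ 4)) := by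
  have hcover : Ioi (0 : ℝ) ⊆ Ioc 0 √a ∪ (Ioc √a 1 ∪ Ioi 1) := by
    rw [Ioc_union_Ioi_eq_Ioi ((sqrt_lt' one_pos).2 (by linarith)).le,
      Ioc_union_Ioi_eq_Ioi (sqrt_nonneg a)]
  have hlayer := lintegral_ofReal_pow_succ_eq_lintegral_meas_le_mul μ
    (ae_of_all _ fun ω => abs_nonneg (X ω)) hX.abs 3
  simp only [Nat.reduceAdd, Even.pow_abs ⟨2, rfl⟩] at hlayer
  rw [hlayer, show ((3 : ℕ) : ℝ) + 1 = 4 by norm_num]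
  calc _ ≤ ∫⁻ t in Ioc 0 √a ∪ (Ioc √a 1 ∪ Ioi 1),
        μ {ω | t ≤ |X ω|} * ENNReal.ofReal (4 * t ^ 3) := lintegral_mono_set hcover
    _ ≤ _ := (lintegral_union_le _ _ _).trans (add_le_add_right (lintegral_union_le _ _ _) _)
    _ ≤ _ := add_le_add (setLIntegral_Ioc_zero_meas_le_mul_le (sqrt_nonneg a))
        (add_le_add (setLIntegral_Ioc_sqrt_one_meas_le_mul_le hb htail ha0)
          (setLIntegral_Ioi_one_meas_le_mul_le hb htail ha0 ha1))
    _ = _ := by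
      rw [← ENNReal.ofReal_add (by positivity) (by positivity),
        ← ENNReal.ofReal_add (by positivity) (by positivity), ← add_assoc,
        show √a ^ 4 = (√a ^ 2) ^ 2 by ring, sq_sqrt ha0]

end MixedTail

/-- Fourth moment bound under a mixed tail: if
`P(|X| ≥ max{a+bt, √(a+bt)}) ≤ e^{−t}` for all `t > 0`, with `0 < a < 1`, `b > 0`,
then `E[X⁴] ≤ a² + 2ab + 2b² + 16a³b + 96b⁴`. -/
theorem fourth_moment_of_mixed_tail
    {Ω : Type*} [MeasurableSpace Ω] (μ : Measure Ω) [IsProbabilityMeasure μ]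
    (X : Ω → ℝ) (hX : Measurable X)
    (a b : ℝ) (ha0 : 0 < a) (ha1 : a < 1) (hb : 0 < b)
    (htail : ∀ t > 0,
      μ {ω | max (a + b * t) (Real.sqrt (a + b * t)) ≤ |X ω|}
        ≤ ENNReal.ofReal (Real.exp (-t))) :
    ∫ ω, (X ω) ^ 4 ∂μ ≤ a ^ 2 + 2 * a * b + 2 * b ^ 2 + 16 * a ^ 3 * b + 96 * b ^ 4 := by
  rw [integral_eq_lintegral_of_nonneg_ae (ae_of_all _ fun ω => by positivity)
    (hX.pow_const 4).aestronglyMeasurable]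
  calc _ ≤ a ^ 2 + (2 * a * b + 2 * b ^ 2) +
        4 * (a ^ 3 * b + 3 * a ^ 2 * b ^ 2 + 6 * a * b ^ 3 + 6 * b ^ 4) :=
        ENNReal.toReal_le_of_le_ofReal (by positivity)
          (HasMixedTail.lintegral_ofReal_pow_four_le hb htail hX.aemeasurable ha0.le ha1)
    _ ≤ _ := by
      have : 0 ≤ b * (2 * a - 3 * b) ^ 2 * (a + 2 * b) := by positivity
      have : 0 ≤ a * b ^ 3 := by positivity
      nlinarith [pow_pos hb 4]
end

section
/- With ψ(Θ)=Θ(ΘᵀΘ)^{-1}Θᵀ and ∇ψ(Θ)(Y) = P⊥ Y (ΘᵀΘ)^{-1}Θᵀ + Θ(ΘᵀΘ)^{-1}Yᵀ P⊥ where P⊥ = I_p − ψ(Θ), the adjoint ∇ψ(Θ)*: R^{p×p} → R^{p×r} with respect to the Frobenius inner product is given by ∇ψ(Θ)*(M) = P⊥ (M + Mᵀ) Θ (ΘᵀΘ)^{-1}. -/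
/-!
Cyclicity of the trace moves `A` and `B` off `Y` in `tr (Mᵀ (A Y B))`, and a term containing
`Yᵀ` is first transposed as a whole. With `P⊥` and `(ΘᵀΘ)⁻¹` symmetric, the two terms of
`∇ψ(Θ)` contribute `P⊥ M Θ (ΘᵀΘ)⁻¹` and `P⊥ Mᵀ Θ (ΘᵀΘ)⁻¹` to the adjoint.
-/

open Matrix

namespace Matrix

theorem IsSymm.mul_mul_transpose {m n R : Type*} [Fintype n] [CommSemiring R]
    {S : Matrix n n R} (hS : S.IsSymm) (A : Matrix m n R) : (A * S * Aᵀ).IsSymm := by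
  rw [IsSymm, transpose_mul, transpose_mul, transpose_transpose, hS.eq, Matrix.mul_assoc]

variable {k l m n R : Type*} [Fintype k] [Fintype l] [Fintype m] [Fintype n] [CommSemiring R]

theorem trace_transpose_mul_mul_mul (M : Matrix m n R) (A : Matrix m k R) (Y : Matrix k l R)
    (B : Matrix l n R) : trace (Mᵀ * (A * Y * B)) = trace ((Aᵀ * M * Bᵀ)ᵀ * Y) := by
  simp only [transpose_mul, transpose_transpose, Matrix.mul_assoc]
  rw [trace_mul_comm B]
  simp only [Matrix.mul_assoc]

theorem trace_transpose_mul_mul_transpose_mul (M : Matrix m n R) (A : Matrix m l R)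
    (Y : Matrix k l R) (B : Matrix k n R) :
    trace (Mᵀ * (A * Yᵀ * B)) = trace ((B * Mᵀ * A)ᵀ * Y) := by
  rw [← trace_transpose]
  simp only [transpose_mul, transpose_transpose, Matrix.mul_assoc]
  rw [← Matrix.mul_assoc Bᵀ, trace_mul_comm (Bᵀ * Y)]
  simp only [Matrix.mul_assoc]

theorem trace_transpose_mul_isSymm_sandwich {R : Type*} [CommRing R] {P : Matrix m m R}
    {S : Matrix n n R} (hP : P.IsSymm) (hS : S.IsSymm) (Θ : Matrix m n R) (M : Matrix m m R)
    (Y : Matrix m n R) :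
    trace ((P * (M + Mᵀ) * Θ * S)ᵀ * Y)
      = trace (Mᵀ * (P * Y * S * Θᵀ + Θ * S * Yᵀ * P)) := by
  rw [Matrix.mul_add Mᵀ, trace_add, Matrix.mul_assoc (P * Y), trace_transpose_mul_mul_mul,
    trace_transpose_mul_mul_transpose_mul, ← trace_add, ← Matrix.add_mul]
  simp only [transpose_add, transpose_mul, transpose_transpose, hP.eq, hS.eq, Matrix.mul_add,
    Matrix.add_mul, Matrix.mul_assoc]

end Matrix

theorem adjoint_fderiv_projection_map_general (p r : ℕ) (Θ : Matrix (Fin p) (Fin r) ℝ) :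
    ∀ (M : Matrix (Fin p) (Fin p) ℝ) (Y : Matrix (Fin p) (Fin r) ℝ),
      Matrix.trace (((1 - Θ * (Θᵀ * Θ)⁻¹ * Θᵀ) * (M + Mᵀ) * Θ * (Θᵀ * Θ)⁻¹)ᵀ * Y)
        = Matrix.trace (Mᵀ *
            ((1 - Θ * (Θᵀ * Θ)⁻¹ * Θᵀ) * Y * (Θᵀ * Θ)⁻¹ * Θᵀ
              + Θ * (Θᵀ * Θ)⁻¹ * Yᵀ * (1 - Θ * (Θᵀ * Θ)⁻¹ * Θᵀ))) := by
  have hG : (Θᵀ * Θ).IsSymm := by rw [IsSymm, transpose_mul, transpose_transpose]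
  have hS : (Θᵀ * Θ)⁻¹.IsSymm := hG.inv
  exact trace_transpose_mul_isSymm_sandwich (isSymm_one.sub (hS.mul_mul_transpose Θ)) hS Θ

/-- The adjoint of `∇ψ(Θ) : Y ↦ P⊥ Y (ΘᵀΘ)⁻¹Θᵀ + Θ(ΘᵀΘ)⁻¹Yᵀ P⊥` with respect to the
Frobenius inner product `⟨A,B⟩ = tr(AᵀB)` is `M ↦ P⊥ (M + Mᵀ) Θ (ΘᵀΘ)⁻¹`,
where `P⊥ = I − Θ(ΘᵀΘ)⁻¹Θᵀ`. -/
theorem adjoint_fderiv_projection_map (p r : ℕ) (Θ : Matrix (Fin p) (Fin r) ℝ)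
    (hΘ : IsUnit (Θᵀ * Θ).det) :
    ∀ (M : Matrix (Fin p) (Fin p) ℝ) (Y : Matrix (Fin p) (Fin r) ℝ),
      Matrix.trace (((1 - Θ * (Θᵀ * Θ)⁻¹ * Θᵀ) * (M + Mᵀ) * Θ * (Θᵀ * Θ)⁻¹)ᵀ * Y)
        = Matrix.trace (Mᵀ *
            ((1 - Θ * (Θᵀ * Θ)⁻¹ * Θᵀ) * Y * (Θᵀ * Θ)⁻¹ * Θᵀ
              + Θ * (Θᵀ * Θ)⁻¹ * Yᵀ * (1 - Θ * (Θᵀ * Θ)⁻¹ * Θᵀ))) :=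
  adjoint_fderiv_projection_map_general p r Θ
end

section
/- Let Θ ∈ R^{p×r} have full column rank, let U = Θ(ΘᵀΘ)^{-1/2} (so UᵀU = I_r) and U⊥ be an orthonormal complement. For the linear maps ∇ψ(Θ)(Y) = U⊥U⊥ᵀ Y W^{-1/2} Uᵀ + U W^{-1/2} Yᵀ U⊥U⊥ᵀ and ∇ψ(Θ)*(M) = U⊥U⊥ᵀ(M+Mᵀ)U W^{-1/2} with W = ΘᵀΘ, the trace of the composed self-adjoint operator satisfies tr(∇ψ(Θ) ∘ ∇ψ(Θ)*) = 2(p−r)·tr(W^{-1}), where the trace of an operator L: R^{p×p}→R^{p×p} is ∑_{i,j} ⟨L(e_i e_jᵀ), e_i e_jᵀ⟩. -/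
/-!
Because `U⊥ᵀU⊥ = 1` and `S` is symmetric, the composed operator is
`M ↦ P(M + Mᵀ)Q + Q(M + Mᵀ)P` with `P = U⊥U⊥ᵀ` and `Q = U S² Uᵀ = U W⁻¹ Uᵀ`. Summing over matrix
units, `M ↦ X(M + Mᵀ)Y` has trace `tr X · tr Y + tr (XᵀY)`. Here `PQ = QP = 0`, `tr P = p − r`
and `tr Q = tr W⁻¹`, which gives `2(p − r) tr W⁻¹`.
-/

open Matrix

namespace Matrix

variable {n R : Type*} [Fintype n] [CommSemiring R]

lemma gradient_comp_adjoint_apply {m k : Type*} [Fintype m] [Fintype k] [DecidableEq k]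
    (U : Matrix n m R) (V : Matrix n k R) (S : Matrix m m R) (hV : Vᵀ * V = 1) (hS : Sᵀ = S)
    (M : Matrix n n R) :
    V * Vᵀ * (V * Vᵀ * (M + Mᵀ) * U * S * S * Uᵀ) + U * S * (V * Vᵀ * (M + Mᵀ) * U * S)ᵀ * V * Vᵀ
      = V * Vᵀ * (M + Mᵀ) * (U * (S * S) * Uᵀ) + U * (S * S) * Uᵀ * (M + Mᵀ) * (V * Vᵀ) := by
  have cancel_V : ∀ X : Matrix k n R, Vᵀ * (V * X) = X := fun X => by
    rw [← Matrix.mul_assoc, hV, Matrix.one_mul]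
  simp only [transpose_mul, transpose_add, transpose_transpose, hS, add_comm Mᵀ,
    Matrix.mul_assoc, cancel_V]

variable [DecidableEq n]

def opTrace (L : Matrix n n R → Matrix n n R) : R :=
  ∑ i, ∑ j, L (single i j 1) i j

lemma opTrace_add (L₁ L₂ : Matrix n n R → Matrix n n R) :
    opTrace (fun M => L₁ M + L₂ M) = opTrace L₁ + opTrace L₂ := by
  simp only [opTrace, add_apply, Finset.sum_add_distrib]

lemma mul_single_mul_apply (X Y : Matrix n n R) (i j a b : n) (c : R) :
    (X * single i j c * Y) a b = X a i * c * Y j b := by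
  simp [mul_apply, single, ite_and, Finset.sum_ite_eq]

lemma opTrace_mul_add_transpose_mul (X Y : Matrix n n R) :
    opTrace (fun M => X * (M + Mᵀ) * Y) = trace X * trace Y + trace (Xᵀ * Y) := by
  simp only [opTrace, mul_add, add_mul, add_apply, transpose_single, mul_single_mul_apply,
    mul_one, Finset.sum_add_distrib]
  simp only [trace, diag_apply, Finset.sum_mul_sum, mul_apply, transpose_apply]
  rw [Finset.sum_comm (f := fun i j => X i j * Y i j)]

end Matrix

theorem trace_fderiv_comp_adjoint_general (p r : ℕ) (hrp : r ≤ p)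
    (U : Matrix (Fin p) (Fin r) ℝ) (Uperp : Matrix (Fin p) (Fin (p - r)) ℝ)
    (W S : Matrix (Fin r) (Fin r) ℝ)
    (hU : Uᵀ * U = 1) (hUperp : Uperpᵀ * Uperp = 1)
    (horth : Uᵀ * Uperp = 0) (hS : Sᵀ = S) (hSS : S * S = W⁻¹) :
    ∑ i : Fin p, ∑ j : Fin p,
        Matrix.trace
          ((Uperp * Uperpᵀ *
              ((Uperp * Uperpᵀ * (Matrix.single i j (1:ℝ) + (Matrix.single i j (1:ℝ))ᵀ) * U * S)
                * S * Uᵀ)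
            + U * S *
              ((Uperp * Uperpᵀ * (Matrix.single i j (1:ℝ) + (Matrix.single i j (1:ℝ))ᵀ) * U * S)ᵀ)
                * Uperp * Uperpᵀ)ᵀ
          * Matrix.single i j (1:ℝ))
      = 2 * ((p : ℝ) - r) * Matrix.trace W⁻¹ := by
  simp only [gradient_comp_adjoint_apply U Uperp S hUperp hS, trace_mul_single,
    transpose_apply, MulOpposite.op_one, one_smul]
  set P := Uperp * Uperpᵀ
  set Q := U * (S * S) * Uᵀ
  have hP : Pᵀ = P := by simp [P]
  have hQ : Qᵀ = Q := by simp [Q, hS, Matrix.mul_assoc]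
  have hPQ : P * Q = 0 := by
    have hUperpU : Uperpᵀ * U = 0 := by
      rw [← transpose_transpose U, ← transpose_mul, horth, transpose_zero]
    simp only [P, Q, Matrix.mul_assoc, ← Matrix.mul_assoc Uperpᵀ U, hUperpU, Matrix.zero_mul,
      Matrix.mul_zero]
  have hQP : Q * P = 0 := by
    rw [← hP, ← hQ, ← transpose_mul, hPQ, transpose_zero]
  have htrP : trace P = p - r := by
    rw [trace_mul_comm, hUperp, trace_one, Fintype.card_fin, Nat.cast_sub hrp]
  have htrQ : trace Q = trace W⁻¹ := by
    rw [trace_mul_comm, ← Matrix.mul_assoc, hU, Matrix.one_mul, hSS]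
  change opTrace (fun M => P * (M + Mᵀ) * Q + Q * (M + Mᵀ) * P) = _
  rw [opTrace_add, opTrace_mul_add_transpose_mul, opTrace_mul_add_transpose_mul, hP, hQ, hPQ, hQP,
    htrP, htrQ]
  simp only [trace_zero]
  ring

/-- With `U ∈ O^{p×r}`, `U⊥` an orthonormal complement, `W = ΘᵀΘ` positive (invertible) and
`S = W^{-1/2}` (a symmetric matrix with `S·S = W⁻¹`), the operator trace of
`∇ψ(Θ) ∘ ∇ψ(Θ)*`, where `∇ψ(Θ)(Y) = U⊥U⊥ᵀ Y S Uᵀ + U S Yᵀ U⊥U⊥ᵀ` and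
`∇ψ(Θ)*(M) = U⊥U⊥ᵀ(M+Mᵀ)U S`, computed as `∑_{i,j} ⟨L(e_i e_jᵀ), e_i e_jᵀ⟩_F`,
equals `2(p−r)·tr(W⁻¹)`. -/
theorem trace_fderiv_comp_adjoint (p r : ℕ) (hrp : r ≤ p)
    (U : Matrix (Fin p) (Fin r) ℝ) (Uperp : Matrix (Fin p) (Fin (p - r)) ℝ)
    (W S : Matrix (Fin r) (Fin r) ℝ)
    (hU : Uᵀ * U = 1) (hUperp : Uperpᵀ * Uperp = 1)
    (horth : Uᵀ * Uperp = 0) (hcomplete : U * Uᵀ + Uperp * Uperpᵀ = 1)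
    (hW : IsUnit W.det) (hS : Sᵀ = S) (hSS : S * S = W⁻¹) :
    ∑ i : Fin p, ∑ j : Fin p,
        Matrix.trace
          ((Uperp * Uperpᵀ *
              ((Uperp * Uperpᵀ * (Matrix.single i j (1:ℝ) + (Matrix.single i j (1:ℝ))ᵀ) * U * S)
                * S * Uᵀ)
            + U * S *
              ((Uperp * Uperpᵀ * (Matrix.single i j (1:ℝ) + (Matrix.single i j (1:ℝ))ᵀ) * U * S)ᵀ)
                * Uperp * Uperpᵀ)ᵀ
          * Matrix.single i j (1:ℝ))
      = 2 * ((p : ℝ) - r) * Matrix.trace W⁻¹ :=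
  trace_fderiv_comp_adjoint_general p r hrp U Uperp W S hU hUperp horth hS hSS
end

section
/- Fix l ≥ 2 and 1 ≤ i_1 < i_2 ≤ l. Define I_1 = {j ∈ [m]^l : j_{i_1} ≠ j_{i_2} and {j_{i_1}, j_{i_2}} is disjoint from the multiset of the other l−2 coordinates}. Then |I_1| = m(m−1)(m−2)^{l−2} (for m ≥ 2), and its complement I_2 = [m]^l \ I_1 satisfies, for any nonnegative weights v_1,...,v_m: ∑_{j ∈ I_2} v_{j_1}···v_{j_l} ≤ 2l (∑_{k=1}^m v_k²)(∑_{k=1}^m v_k)^{l−2}. -/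
/-!
Fibring the good tuples over the pair of distinct values `(j i₁, j i₂)`, each fibre is a product
set with `(m - 2) ^ (l - 2)` elements. A bad tuple has `j p = j q` for some `p ≠ q` with
`q ∈ {i₁, i₂}`; there are at most `2 l` such pairs, and for each of them the weighted sum over the
tuples with `j p = j q` factorises as `(∑ v²) (∑ v) ^ (l - 2)`.
-/

open Finset

namespace Finset

theorem sum_biUnion_le_of_nonneg {ι β R : Type*} [DecidableEq β] [AddCommMonoid R] [PartialOrder R]
    [IsOrderedAddMonoid R] {f : β → R} (hf : ∀ x, 0 ≤ f x) (s : Finset ι) (t : ι → Finset β) :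
    ∑ x ∈ s.biUnion t, f x ≤ ∑ i ∈ s, ∑ x ∈ t i, f x := by
  rw [← sup_eq_biUnion]
  refine s.apply_sup_le_sum (f := fun u => ∑ x ∈ u, f x) sum_empty fun {u w} => ?_
  rw [sup_eq_union, ← sum_union_inter]
  exact le_add_of_nonneg_right (sum_nonneg fun x _ => hf x)

end Finset

section PairedCoordinates

variable {ι α β : Type*} [Fintype ι] [DecidableEq ι] {a b : ι}

def piPair (a b : ι) (x y z : β) : ι → β := fun k => if k = a then x else if k = b then y else z

theorem prod_piPair {M : Type*} [CommMonoid M] (hab : a ≠ b) (x y z : β) (f : β → M) :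
    ∏ k, f (piPair a b x y z k) = f x * f y * f z ^ (Fintype.card ι - 2) := by
  rw [← prod_sdiff (subset_univ {a, b}), prod_pair hab, mul_comm]
  congr 1
  · simp [piPair, hab.symm]
  · rw [prod_congr rfl fun k hk => ?_, prod_const, card_sdiff_of_subset (subset_univ _),
      card_univ, card_pair hab]
    simp only [mem_sdiff, mem_univ, mem_insert, mem_singleton, not_or, true_and] at hk
    simp [piPair, hk.1, hk.2]

theorem mem_piFinset_piPair (hab : a ≠ b) {A B C : Finset α} {j : ι → α} :
    j ∈ Fintype.piFinset (piPair a b A B C) ↔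
      j a ∈ A ∧ j b ∈ B ∧ ∀ k, k ≠ a → k ≠ b → j k ∈ C := by
  simp only [Fintype.mem_piFinset, piPair]
  refine ⟨fun h => ⟨by simpa using h a, by simpa [hab.symm] using h b, fun k hka hkb => ?_⟩,
    fun ⟨ha, hb, hC⟩ k => ?_⟩
  · simpa [hka, hkb] using h k
  · by_cases hka : k = a
    · simp [hka, ha]
    by_cases hkb : k = b
    · simp [hkb, hab.symm, hb]
    simp [hka, hkb, hC k hka hkb]

variable [Fintype α] [DecidableEq α]

def pairAvoiding (a b : ι) : Finset (ι → α) :=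
  {j | j a ≠ j b ∧ ∀ k, k ≠ a → k ≠ b → j k ≠ j a ∧ j k ≠ j b}

theorem card_pairAvoiding (hab : a ≠ b) :
    #(pairAvoiding a b : Finset (ι → α))
      = Fintype.card α * (Fintype.card α - 1) * (Fintype.card α - 2) ^ (Fintype.card ι - 2) := by
  rw [card_eq_sum_card_fiberwise (f := fun j => (j a, j b)) (t := univ.offDiag)
    fun j hj => by simpa using (mem_filter.1 hj).2.1]
  have fiber : ∀ p ∈ (univ : Finset α).offDiag,
      #{j ∈ (pairAvoiding a b : Finset (ι → α)) | (j a, j b) = p}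
        = (Fintype.card α - 2) ^ (Fintype.card ι - 2) := by
    rintro ⟨x, y⟩ hxy
    have hxy : x ≠ y := (mem_offDiag.1 hxy).2.2
    have hfiber : {j ∈ (pairAvoiding a b : Finset (ι → α)) | (j a, j b) = (x, y)}
        = Fintype.piFinset (piPair a b {x} {y} {x, y}ᶜ) := by
      ext j
      simp only [mem_piFinset_piPair hab, mem_filter, mem_univ, true_and, Prod.mk.injEq,
        mem_singleton, mem_compl, mem_insert, not_or, pairAvoiding]
      grind
    rw [hfiber, Fintype.card_piFinset, prod_piPair hab _ _ _ card, card_singleton, card_singleton,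
      card_compl, card_pair hxy, one_mul, one_mul]
  rw [sum_congr rfl fiber, sum_const, offDiag_card, card_univ, smul_eq_mul, Nat.mul_sub_one]

theorem sum_prod_filter_apply_eq_apply {R : Type*} [CommSemiring R] (hab : a ≠ b) (v : α → R) :
    ∑ j : ι → α with j a = j b, ∏ k, v (j k)
      = (∑ x, v x ^ 2) * (∑ x, v x) ^ (Fintype.card ι - 2) := by
  rw [← sum_fiberwise _ (fun j => j a), sum_mul]
  refine sum_congr rfl fun x _ => ?_
  have hfiber : ((univ.filter fun j : ι → α => j a = j b).filter fun j => j a = x) =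
      Fintype.piFinset (piPair a b {x} {x} univ) := by
    ext j
    simp only [mem_piFinset_piPair hab, mem_filter, mem_univ, true_and, mem_singleton]
    grind
  rw [hfiber, ← prod_univ_sum, prod_piPair hab _ _ _ fun s => ∑ y ∈ s, v y]
  simp [sq]

theorem sum_prod_sdiff_pairAvoiding_le {R : Type*} [CommSemiring R] [PartialOrder R]
    [IsOrderedRing R] (hab : a ≠ b) {v : α → R} (hv : ∀ x, 0 ≤ v x) :
    ∑ j ∈ univ \ (pairAvoiding a b : Finset (ι → α)), ∏ k, v (j k)
      ≤ 2 * Fintype.card ι * (∑ x, v x ^ 2) * (∑ x, v x) ^ (Fintype.card ι - 2) := by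
  set E := (∑ x, v x ^ 2) * (∑ x, v x) ^ (Fintype.card ι - 2)
  have hE : 0 ≤ E := mul_nonneg (sum_nonneg fun x _ => pow_nonneg (hv x) 2)
    (pow_nonneg (sum_nonneg fun x _ => hv x) _)
  have hprod : ∀ j : ι → α, 0 ≤ ∏ k, v (j k) := fun j => prod_nonneg fun k _ => hv (j k)
  set P := {p ∈ (univ : Finset ι) ×ˢ {a, b} | p.1 ≠ p.2}
  have cover : univ \ (pairAvoiding a b : Finset (ι → α))
      ⊆ P.biUnion fun p => {j : ι → α | j p.1 = j p.2} := by
    intro j hj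
    obtain hjab | ⟨k, hka, hkb, hk⟩ : j a = j b ∨ ∃ k, k ≠ a ∧ k ≠ b ∧ (j k = j a ∨ j k = j b) := by
      simp only [pairAvoiding, mem_sdiff, mem_filter, mem_univ, true_and] at hj
      by_contra! h
      exact hj ⟨h.1, h.2⟩
    · exact mem_biUnion.2 ⟨(a, b), by simp [P, hab], by simpa using hjab⟩
    · rcases hk with hk | hk
      · exact mem_biUnion.2 ⟨(k, a), by simp [P, hka], by simpa using hk⟩
      · exact mem_biUnion.2 ⟨(k, b), by simp [P, hkb], by simpa using hk⟩
  have hP : #P ≤ 2 * Fintype.card ι :=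
    card_filter_le _ _ |>.trans (by rw [card_product, card_univ, card_pair hab, mul_comm])
  calc ∑ j ∈ univ \ (pairAvoiding a b : Finset (ι → α)), ∏ k, v (j k)
        ≤ ∑ j ∈ P.biUnion fun p => {j : ι → α | j p.1 = j p.2}, ∏ k, v (j k) :=
        sum_le_sum_of_subset_of_nonneg cover fun j _ _ => hprod j
    _ ≤ ∑ p ∈ P, ∑ j : ι → α with j p.1 = j p.2, ∏ k, v (j k) :=
        sum_biUnion_le_of_nonneg hprod _ _
    _ = #P • E := by
        rw [sum_congr rfl fun p hp => sum_prod_filter_apply_eq_apply (mem_filter.1 hp).2 v,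
          sum_const]
    _ ≤ (2 * Fintype.card ι) • E := nsmul_le_nsmul_left hE hP
    _ = _ := by rw [nsmul_eq_mul]; push_cast; ring

end PairedCoordinates

theorem good_index_tuples_card_and_complement_bound_general
    (m l : ℕ) (i₁ i₂ : Fin l) (h12 : i₁ < i₂)
    (v : Fin m → ℝ) (hv : ∀ k, 0 ≤ v k) :
    ((Finset.univ.filter (fun j : Fin l → Fin m =>
        j i₁ ≠ j i₂ ∧ ∀ k, k ≠ i₁ → k ≠ i₂ → j k ≠ j i₁ ∧ j k ≠ j i₂)).card
      = m * (m - 1) * (m - 2) ^ (l - 2))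
    ∧ (∑ j ∈ Finset.univ \ (Finset.univ.filter (fun j : Fin l → Fin m =>
          j i₁ ≠ j i₂ ∧ ∀ k, k ≠ i₁ → k ≠ i₂ → j k ≠ j i₁ ∧ j k ≠ j i₂)),
        ∏ k, v (j k)
      ≤ 2 * l * (∑ k, (v k) ^ 2) * (∑ k, v k) ^ (l - 2)) := by
  constructor
  · simpa [pairAvoiding] using card_pairAvoiding (α := Fin m) h12.ne
  · simpa [pairAvoiding] using sum_prod_sdiff_pairAvoiding_le h12.ne hv

/-- For `m ≥ 2`, `l ≥ 2` and fixed positions `i₁ < i₂` in `Fin l`, the set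
`I₁ = {j ∈ [m]^l : j i₁ ≠ j i₂ and {j i₁, j i₂} avoids all other coordinates}`
has cardinality `m(m−1)(m−2)^{l−2}`, and its complement `I₂` satisfies, for any
nonnegative weights `v`, `∑_{j ∈ I₂} ∏_k v (j k) ≤ 2l (∑ v²)(∑ v)^{l−2}`. -/
theorem good_index_tuples_card_and_complement_bound
    (m l : ℕ) (hm : 2 ≤ m) (hl : 2 ≤ l) (i₁ i₂ : Fin l) (h12 : i₁ < i₂)
    (v : Fin m → ℝ) (hv : ∀ k, 0 ≤ v k) :
    ((Finset.univ.filter (fun j : Fin l → Fin m =>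
        j i₁ ≠ j i₂ ∧ ∀ k, k ≠ i₁ → k ≠ i₂ → j k ≠ j i₁ ∧ j k ≠ j i₂)).card
      = m * (m - 1) * (m - 2) ^ (l - 2))
    ∧ (∑ j ∈ Finset.univ \ (Finset.univ.filter (fun j : Fin l → Fin m =>
          j i₁ ≠ j i₂ ∧ ∀ k, k ≠ i₁ → k ≠ i₂ → j k ≠ j i₁ ∧ j k ≠ j i₂)),
        ∏ k, v (j k)
      ≤ 2 * l * (∑ k, (v k) ^ 2) * (∑ k, v k) ^ (l - 2)) :=
  good_index_tuples_card_and_complement_bound_general m l i₁ i₂ h12 v hv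
end
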